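/- Let P₀ and P₁ be probability measures on ℝ with cdfs F₀, F₁ and quantile functions F₀⁻¹, F₁⁻¹. Let J be the pushforward of Lebesgue measure on (0,1) under u ↦ (F₀⁻¹(1 − u), F₁⁻¹(u)) (the antitone coupling). Then J has first marginal P₀ and second marginal P₁, and J((−∞, x] × (−∞, y]) = max(F₀(x) + F₁(y) − 1, 0) for all x, y ∈ ℝ; that is, the antitone coupling attains the Fréchet–Hoeffding lower bound. -/

import Mathlib

open MeasureTheory Set Filter

/-- The cumulative distribution function of a measure on ℝ. -/
noncomputable def cdf (P : MeasureTheory.Measure ℝ) (y : ℝ) : ℝ := (P (Set.Iic y)).toReal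

/-- The quantile function (generalized inverse cdf) of a measure on ℝ. -/
noncomputable def quantile (P : MeasureTheory.Measure ℝ) (u : ℝ) : ℝ :=
  sInf {y : ℝ | u ≤ cdf P y}

/-!
For `u ∈ (0,1)` the quantile function and the cdf form a Galois connection,
`F⁻¹(u) ≤ y ↔ u ≤ F(y)`. Hence `{u ∈ (0,1) | F₀⁻¹(1 - u) ≤ x, F₁⁻¹(u) ≤ y}` is the interval
`[1 - F₀(x), F₁(y)]` cut to `(0,1)`, of length `(F₀(x) + F₁(y) - 1)⁺`. The same connection shows
that `F⁻¹` pushes the uniform law on `(0,1)` forward to `P`; for the first marginal this is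
combined with the reflection `u ↦ 1 - u`, which preserves the uniform law.
-/

lemma volume_Ioo_inter_Icc_of_le {a b s t : ℝ} (hs : a ≤ s) (ht : t ≤ b) :
    volume (Ioo a b ∩ Icc s t) = ENNReal.ofReal (t - s) := by
  refine le_antisymm ((measure_mono inter_subset_right).trans_eq Real.volume_Icc) ?_
  rw [← Real.volume_Ioo]
  exact measure_mono fun u hu => ⟨⟨hs.trans_lt hu.1, hu.2.trans_le ht⟩, Ioo_subset_Icc_self hu⟩

lemma map_one_sub_volume_restrict_Ioo :
    (volume.restrict (Ioo (0:ℝ) 1)).map (fun u => 1 - u) = volume.restrict (Ioo 0 1) := by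
  have h := (Measure.measurePreserving_sub_left volume (1:ℝ)).restrict_preimage
    (measurableSet_Ioo (a := 0) (b := 1))
  rw [preimage_const_sub_Ioo, sub_self, sub_zero] at h
  exact h.map_eq

lemma one_sub_mem_Ioo {u : ℝ} (hu : u ∈ Ioo (0:ℝ) 1) : 1 - u ∈ Ioo (0:ℝ) 1 :=
  ⟨sub_pos.2 hu.2, sub_lt_self 1 hu.1⟩

section Quantile

variable (P : Measure ℝ) [IsProbabilityMeasure P]

lemma cdf_eq_probabilityTheory_cdf : cdf P = ProbabilityTheory.cdf P :=
  funext fun y => (ProbabilityTheory.cdf_eq_real P y).symm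

lemma cdf_mem_Icc (y : ℝ) : cdf P y ∈ Icc 0 1 := by
  rw [cdf_eq_probabilityTheory_cdf]
  exact ⟨ProbabilityTheory.cdf_nonneg P y, ProbabilityTheory.cdf_le_one P y⟩

lemma quantile_le_iff {u : ℝ} (hu : u ∈ Ioo 0 1) {y : ℝ} : quantile P u ≤ y ↔ u ≤ cdf P y := by
  set F := ProbabilityTheory.cdf P
  rw [quantile, cdf_eq_probabilityTheory_cdf]
  obtain ⟨z, hz⟩ :=
    ((ProbabilityTheory.tendsto_cdf_atTop P).eventually (eventually_gt_nhds hu.2)).exists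
  obtain ⟨w, hw⟩ :=
    ((ProbabilityTheory.tendsto_cdf_atBot P).eventually (eventually_lt_nhds hu.1)).exists
  have hbdd : BddBelow {y | u ≤ F y} := ⟨w, fun y hy => (F.mono.reflect_lt (hw.trans_le hy)).le⟩
  -- right-continuity of `F` puts the infimum in the set
  have hmem : u ≤ F (sInf {y | u ≤ F y}) := by
    rw [← F.iInf_Ioi_eq]
    refine le_ciInf fun r => ?_
    obtain ⟨s, hs, hsr⟩ := exists_lt_of_csInf_lt ⟨z, hz.le⟩ r.2
    exact hs.trans (F.mono hsr.le)
  exact ⟨fun h => hmem.trans (F.mono h), fun h => csInf_le hbdd h⟩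

lemma quantile_monotoneOn : MonotoneOn (quantile P) (Ioo 0 1) :=
  fun _ hu _ hv huv => (quantile_le_iff P hu).2 (huv.trans ((quantile_le_iff P hv).1 le_rfl))

lemma aemeasurable_quantile : AEMeasurable (quantile P) (volume.restrict (Ioo 0 1)) :=
  aemeasurable_restrict_of_monotoneOn measurableSet_Ioo (quantile_monotoneOn P)

lemma preimage_quantile_Iic_inter_Ioo (y : ℝ) :
    quantile P ⁻¹' Iic y ∩ Ioo 0 1 = Ioo 0 1 ∩ Icc 0 (cdf P y) := by
  ext u
  simp only [mem_inter_iff, mem_preimage, mem_Iic, mem_Icc]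
  exact ⟨fun ⟨h, hu⟩ => ⟨hu, hu.1.le, (quantile_le_iff P hu).1 h⟩,
    fun ⟨hu, _, h⟩ => ⟨(quantile_le_iff P hu).2 h, hu⟩⟩

theorem map_quantile_volume_restrict_Ioo :
    (volume.restrict (Ioo (0:ℝ) 1)).map (quantile P) = P := by
  refine Measure.ext_of_Iic _ _ fun y => ?_
  rw [Measure.map_apply_of_aemeasurable (aemeasurable_quantile P) measurableSet_Iic,
    Measure.restrict_apply' measurableSet_Ioo, preimage_quantile_Iic_inter_Ioo,
    volume_Ioo_inter_Icc_of_le le_rfl (cdf_mem_Icc P y).2, sub_zero, cdf,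
    ENNReal.ofReal_toReal (measure_ne_top P _)]

lemma aemeasurable_quantile_one_sub :
    AEMeasurable (fun u => quantile P (1 - u)) (volume.restrict (Ioo (0:ℝ) 1)) :=
  (map_one_sub_volume_restrict_Ioo ▸ aemeasurable_quantile P).comp_measurable (by fun_prop)

lemma map_quantile_one_sub :
    (volume.restrict (Ioo (0:ℝ) 1)).map (fun u => quantile P (1 - u)) = P := by
  have hq : AEMeasurable (quantile P) ((volume.restrict (Ioo (0:ℝ) 1)).map (fun u => 1 - u)) := by
    rw [map_one_sub_volume_restrict_Ioo]; exact aemeasurable_quantile P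
  rw [← Function.comp_def, ← hq.map_map_of_aemeasurable (by fun_prop),
    map_one_sub_volume_restrict_Ioo, map_quantile_volume_restrict_Ioo]

end Quantile

lemma preimage_antitone_coupling_Iic_prod_Iic_inter_Ioo (P0 P1 : Measure ℝ)
    [IsProbabilityMeasure P0] [IsProbabilityMeasure P1] (x y : ℝ) :
    (fun u => (quantile P0 (1 - u), quantile P1 u)) ⁻¹' (Iic x ×ˢ Iic y) ∩ Ioo 0 1 =
      Ioo 0 1 ∩ Icc (1 - cdf P0 x) (cdf P1 y) := by
  ext u
  simp only [mem_inter_iff, mem_preimage, mem_prod, mem_Iic, mem_Icc]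
  rw [and_comm]
  refine and_congr_right fun hu => ?_
  rw [quantile_le_iff P0 (one_sub_mem_Ioo hu), quantile_le_iff P1 hu, sub_le_comm]

/-- The antitone coupling is a coupling of P0 and P1 attaining the Fréchet–Hoeffding
lower bound. -/
theorem antitone_coupling_attains_lower_bound
    (P0 P1 : Measure ℝ) [IsProbabilityMeasure P0] [IsProbabilityMeasure P1]
    (J : Measure (ℝ × ℝ))
    (hJ : J = (volume.restrict (Ioo (0:ℝ) 1)).map
      (fun u => (quantile P0 (1 - u), quantile P1 u))) :
    J.map Prod.fst = P0 ∧ J.map Prod.snd = P1 ∧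
    ∀ x y : ℝ, (J (Iic x ×ˢ Iic y)).toReal = max (cdf P0 x + cdf P1 y - 1) 0 := by
  subst hJ
  have hpair := (aemeasurable_quantile_one_sub P0).prodMk (aemeasurable_quantile P1)
  refine ⟨?_, ?_, fun x y => ?_⟩
  · rw [AEMeasurable.map_map_of_aemeasurable measurable_fst.aemeasurable hpair]
    exact map_quantile_one_sub P0
  · rw [AEMeasurable.map_map_of_aemeasurable measurable_snd.aemeasurable hpair]
    exact map_quantile_volume_restrict_Ioo P1
  · rw [Measure.map_apply_of_aemeasurable hpair (measurableSet_Iic.prod measurableSet_Iic),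
      Measure.restrict_apply' measurableSet_Ioo,
      preimage_antitone_coupling_Iic_prod_Iic_inter_Ioo,
      volume_Ioo_inter_Icc_of_le (sub_nonneg.2 (cdf_mem_Icc P0 x).2) (cdf_mem_Icc P1 y).2,
      ENNReal.toReal_ofReal', sub_sub_eq_add_sub, add_comm (cdf P1 y)]
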